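/- Correctness of the recursive reflection step: let g₀ ≠ g_i be two generators in the Euclidean plane, and let p₀ ≠ p₁ be two distinct points that are each equidistant from g₀ and g_i (i.e., dist(p₀, g₀) = dist(p₀, g_i) and dist(p₁, g₀) = dist(p₁, g_i); p₀ and p₁ are the endpoints of the ridge shared by the two cells). Then, with v = p₁ − p₀, the generator g_i is recovered exactly by the formula g_i = 2p₀ + 2(⟪v, g₀ − p₀⟫ / ⟪v, v⟫)·v − g₀. -/

import Mathlib

open RealInnerProductSpace

noncomputable section

set_option maxHeartbeats 1000000

/-- The Euclidean plane. -/
abbrev E2 := EuclideanSpace ℝ (Fin 2)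

/-- **Correctness of the recursive reflection step.**  If `g₀ ≠ gᵢ` are two generators and
`p₀ ≠ p₁` are two distinct points each equidistant from `g₀` and `gᵢ` (the endpoints of the
shared ridge), then with `v = p₁ - p₀` the generator `gᵢ` is recovered exactly by
`gᵢ = 2p₀ + 2(⟪v, g₀ - p₀⟫ / ⟪v, v⟫)·v - g₀`. -/
theorem reflection_step_recovers_generator (g₀ gi p₀ p₁ : E2)
    (hg : g₀ ≠ gi) (hp : p₀ ≠ p₁)
    (h₀ : dist p₀ g₀ = dist p₀ gi) (h₁ : dist p₁ g₀ = dist p₁ gi) :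
    gi = (2 : ℝ) • p₀ +
        (2 * (⟪p₁ - p₀, g₀ - p₀⟫ / ⟪p₁ - p₀, p₁ - p₀⟫)) • (p₁ - p₀) - g₀ := by
  set a0 : ℝ := g₀ 0 - p₀ 0 with ha0
  set a1 : ℝ := g₀ 1 - p₀ 1 with ha1
  set b0 : ℝ := gi 0 - p₀ 0 with hb0
  set b1 : ℝ := gi 1 - p₀ 1 with hb1
  set v0 : ℝ := p₁ 0 - p₀ 0 with hv0
  set v1 : ℝ := p₁ 1 - p₀ 1 with hv1
  have H0 : (p₀ 0 - g₀ 0)^2 + (p₀ 1 - g₀ 1)^2 = (p₀ 0 - gi 0)^2 + (p₀ 1 - gi 1)^2 := by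
    rw [EuclideanSpace.dist_eq, EuclideanSpace.dist_eq,
      Real.sqrt_inj (by positivity) (by positivity)] at h₀
    simpa [Fin.sum_univ_two, Real.dist_eq, sq_abs] using h₀
  have H1 : (p₁ 0 - g₀ 0)^2 + (p₁ 1 - g₀ 1)^2 = (p₁ 0 - gi 0)^2 + (p₁ 1 - gi 1)^2 := by
    rw [EuclideanSpace.dist_eq, EuclideanSpace.dist_eq,
      Real.sqrt_inj (by positivity) (by positivity)] at h₁
    simpa [Fin.sum_univ_two, Real.dist_eq, sq_abs] using h₁
  have e1 : a0^2 + a1^2 = b0^2 + b1^2 := by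
    simp only [ha0, ha1, hb0, hb1]; linear_combination H0
  have e2 : (a0 - v0)^2 + (a1 - v1)^2 = (b0 - v0)^2 + (b1 - v1)^2 := by
    simp only [ha0, ha1, hb0, hb1, hv0, hv1]; linear_combination H1
  have lin : v0*a0 + v1*a1 = v0*b0 + v1*b1 := by linear_combination (1/2) * e1 - (1/2) * e2
  have ht : v0^2 + v1^2 ≠ 0 := by
    intro h
    apply hp
    have h0 : v0 = 0 := by nlinarith [sq_nonneg v0, sq_nonneg v1]
    have h1 : v1 = 0 := by nlinarith [sq_nonneg v0, sq_nonneg v1]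
    have e0 : p₀ 0 = p₁ 0 := by rw [hv0] at h0; linarith
    have e1' : p₀ 1 = p₁ 1 := by rw [hv1] at h1; linarith
    ext i
    fin_cases i <;> assumption
  have sq : (v0*a1 - v1*a0)^2 = (v0*b1 - v1*b0)^2 := by
    linear_combination (v0^2 + v1^2) * e1 - (v0*a0 + v1*a1 + v0*b0 + v1*b1) * lin
  have hcase : v0*a1 - v1*a0 = v0*b1 - v1*b0 ∨ v0*a1 - v1*a0 = -(v0*b1 - v1*b0) := by
    rcases mul_eq_zero.mp (show ((v0*a1 - v1*a0) - (v0*b1 - v1*b0)) *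
        ((v0*a1 - v1*a0) + (v0*b1 - v1*b0)) = 0 by linear_combination sq) with h | h
    · left; linarith
    · right; linarith
  rcases hcase with hc | hc
  · -- then g₀ = gi, contradiction
    exfalso
    apply hg
    have h5 : (v0^2 + v1^2) * (a0 - b0) = 0 := by linear_combination v0 * lin - v1 * hc
    have h6 : (v0^2 + v1^2) * (a1 - b1) = 0 := by linear_combination v1 * lin + v0 * hc
    have hab0 : a0 = b0 := by
      have := (mul_eq_zero.mp h5).resolve_left ht; linarith
    have hab1 : a1 = b1 := by
      have := (mul_eq_zero.mp h6).resolve_left ht; linarith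
    ext i
    fin_cases i
    · show g₀ 0 = gi 0
      rw [ha0, hb0] at hab0; linarith
    · show g₀ 1 = gi 1
      rw [ha1, hb1] at hab1; linarith
  · -- the reflection formula
    have hiv : ⟪p₁ - p₀, g₀ - p₀⟫ = v0*a0 + v1*a1 := by
      simp only [PiLp.inner_apply, RCLike.inner_apply, conj_trivial, Fin.sum_univ_two,
        PiLp.sub_apply, ha0, ha1, hv0, hv1]
      ring
    have hvv : ⟪p₁ - p₀, p₁ - p₀⟫ = v0^2 + v1^2 := by
      simp only [PiLp.inner_apply, RCLike.inner_apply, conj_trivial, Fin.sum_univ_two,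
        PiLp.sub_apply, hv0, hv1]
      ring
    ext i
    fin_cases i
    · show gi 0 = ((2 : ℝ) • p₀ + (2 * (⟪p₁ - p₀, g₀ - p₀⟫ / ⟪p₁ - p₀, p₁ - p₀⟫)) • (p₁ - p₀) - g₀) 0
      simp only [PiLp.add_apply, PiLp.sub_apply, PiLp.smul_apply, smul_eq_mul, hiv, hvv]
      have key : (v0^2 + v1^2) * (b0 + a0) = 2 * v0 * (v0*a0 + v1*a1) := by
        linear_combination (-v0) * lin - v1 * hc
      have hgi : gi 0 = b0 + p₀ 0 := by rw [hb0]; ring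
      have hg0 : g₀ 0 = a0 + p₀ 0 := by rw [ha0]; ring
      rw [hgi, hg0]
      field_simp
      linear_combination key
    · show gi 1 = ((2 : ℝ) • p₀ + (2 * (⟪p₁ - p₀, g₀ - p₀⟫ / ⟪p₁ - p₀, p₁ - p₀⟫)) • (p₁ - p₀) - g₀) 1
      simp only [PiLp.add_apply, PiLp.sub_apply, PiLp.smul_apply, smul_eq_mul, hiv, hvv]
      have key : (v0^2 + v1^2) * (b1 + a1) = 2 * v1 * (v0*a0 + v1*a1) := by
        linear_combination (-v1) * lin + v0 * hc
      have hgi : gi 1 = b1 + p₀ 1 := by rw [hb1]; ring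
      have hg1 : g₀ 1 = a1 + p₀ 1 := by rw [ha1]; ring
      rw [hgi, hg1]
      field_simp
      linear_combination key
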